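/- (Theorem B, negative-tilt case.) For every real λ < 0, the covariance of x and x² under the exponentially tilted Wigner semicircle measure is strictly negative: Cov_λ(x, x²) = E_λ[x³] − E_λ[x]·E_λ[x²] < 0. -/

import Mathlib

open intervalIntegral

/-- The exponentially tilted Wigner semicircle weight on `[-1,1]`. -/
noncomputable def tiltW (lam x : ℝ) : ℝ := Real.sqrt (1 - x ^ 2) * Real.exp (lam * x)

/-- The normalization constant `Z(λ)`. -/
noncomputable def tiltZ (lam : ℝ) : ℝ := ∫ x in (-1 : ℝ)..1, tiltW lam x

/-- The mean `E_λ[f]` under the tilted semicircle measure. -/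
noncomputable def tiltE (lam : ℝ) (f : ℝ → ℝ) : ℝ :=
  (tiltZ lam)⁻¹ * ∫ x in (-1 : ℝ)..1, f x * tiltW lam x

/-- The covariance `Cov_λ(f, g)` under the tilted semicircle measure. -/
noncomputable def tiltCov (lam : ℝ) (f g : ℝ → ℝ) : ℝ :=
  tiltE lam (fun x => f x * g x) - tiltE lam f * tiltE lam g

/-! Averaging over two independent samples gives the representation
`2 Z² Cov_λ(f, g) = ∫∫ (f x - f y)(g x - g y) w_λ(x) w_λ(y)`, whose kernel for `f = x`, `g = x²`
is `(x - y)²(x + y)`. Symmetrizing the integrand under `(x, y) ↦ (-x, -y)` replaces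
`e^{λ(x+y)}` by `sinh (λ(x+y))`, and `(x + y) sinh (λ(x+y)) < 0` for `λ < 0` and `x + y ≠ 0`. -/

open Set Function Real

section IteratedIntegral

variable {f : ℝ → ℝ → ℝ}

theorem integral_integral_neg_of_nonpos_of_neg (hf : Continuous (uncurry f))
    {a b c d : ℝ} (hab : a < b) (hcd : c < d) (hle : ∀ x ∈ Icc a b, ∀ y ∈ Icc c d, f x y ≤ 0)
    {x₀ y₀ : ℝ} (hx₀ : x₀ ∈ Icc a b) (hy₀ : y₀ ∈ Icc c d) (hlt : f x₀ y₀ < 0) :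
    ∫ x in a..b, ∫ y in c..d, f x y < 0 := by
  have hslice (x : ℝ) : Continuous (f x) := hf.uncurry_left x
  have hinner_le (x : ℝ) (hx : x ∈ Icc a b) : ∫ y in c..d, f x y ≤ 0 := by
    simpa using integral_mono_on hcd.le ((hslice x).intervalIntegrable _ _)
      intervalIntegrable_const (hle x hx)
  have hinner_lt : ∫ y in c..d, f x₀ y < 0 := by
    simpa using integral_lt_integral_of_continuousOn_of_le_of_exists_lt hcd
      (hslice x₀).continuousOn continuousOn_const
      (fun y hy => hle x₀ hx₀ y (Ioc_subset_Icc_self hy)) ⟨y₀, hy₀, hlt⟩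
  simpa using integral_lt_integral_of_continuousOn_of_le_of_exists_lt hab
    (by fun_prop : Continuous fun x => ∫ y in c..d, f x y).continuousOn continuousOn_const
    (fun x hx => hinner_le x (Ioc_subset_Icc_self hx)) ⟨x₀, hx₀, hinner_lt⟩

theorem integral_integral_eq_half_integral_integral_add_comp_neg (hf : Continuous (uncurry f))
    (a b : ℝ) :
    ∫ x in -a..a, ∫ y in -b..b, f x y =
      (∫ x in -a..a, ∫ y in -b..b, (f x y + f (-x) (-y))) / 2 := by
  have hf' : Continuous (uncurry fun x y => f (-x) (-y)) := by fun_prop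
  have hneg :
      ∫ x in -a..a, ∫ y in -b..b, f (-x) (-y) = ∫ x in -a..a, ∫ y in -b..b, f x y := by
    simp [integral_comp_neg, integral_comp_neg fun x => ∫ y in -b..b, f x y]
  rw [integral_congr fun x _ => integral_add
      ((hf.uncurry_left x).intervalIntegrable _ _) ((hf'.uncurry_left x).intervalIntegrable _ _),
    integral_add (Continuous.intervalIntegrable (by fun_prop) _ _)
      (Continuous.intervalIntegrable (by fun_prop) _ _), hneg]
  ring

end IteratedIntegral

theorem integral_integral_sub_mul_sub {w f g : ℝ → ℝ} (hw : Continuous w) (hf : Continuous f)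
    (hg : Continuous g) (a b : ℝ) :
    ∫ x in a..b, ∫ y in a..b, (f x - f y) * (g x - g y) * (w x * w y) =
      2 * ((∫ x in a..b, w x) * (∫ x in a..b, f x * g x * w x) -
        (∫ x in a..b, f x * w x) * ∫ x in a..b, g x * w x) := by
  have hint {u : ℝ → ℝ} (hu : Continuous u) : IntervalIntegrable u MeasureTheory.volume a b :=
    hu.intervalIntegrable a b
  have inner (x : ℝ) : ∫ y in a..b, (f x - f y) * (g x - g y) * (w x * w y) =
      f x * g x * w x * (∫ y in a..b, w y) + w x * (∫ y in a..b, f y * g y * w y) -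
        f x * w x * (∫ y in a..b, g y * w y) - g x * w x * ∫ y in a..b, f y * w y := by
    simp only [← integral_const_mul]
    rw [← integral_add, ← integral_sub, ← integral_sub]
    · exact integral_congr fun y _ => by ring
    all_goals exact hint (by fun_prop)
  simp only [integral_congr fun x _ => inner x]
  rw [integral_sub, integral_sub, integral_add]
  · simp only [integral_mul_const]
    ring
  all_goals exact hint (by fun_prop)

theorem mul_sinh_mul_nonpos {lam : ℝ} (hlam : lam ≤ 0) (t : ℝ) : t * sinh (lam * t) ≤ 0 := by
  rcases le_total t 0 with ht | ht
  · exact mul_nonpos_of_nonpos_of_nonneg ht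
      (sinh_nonneg_iff.2 (mul_nonneg_of_nonpos_of_nonpos hlam ht))
  · exact mul_nonpos_of_nonneg_of_nonpos ht
      (sinh_nonpos_iff.2 (mul_nonpos_of_nonpos_of_nonneg hlam ht))

theorem mul_sinh_mul_neg {lam t : ℝ} (hlam : lam < 0) (ht : 0 < t) : t * sinh (lam * t) < 0 :=
  mul_neg_of_pos_of_neg ht (sinh_neg_iff.2 (mul_neg_of_neg_of_pos hlam ht))

theorem tiltW_continuous (lam : ℝ) : Continuous (tiltW lam) := by
  unfold tiltW; fun_prop

theorem tiltZ_pos (lam : ℝ) : 0 < tiltZ lam := by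
  refine intervalIntegral_pos_of_pos_on ((tiltW_continuous lam).intervalIntegrable _ _)
    (fun x hx => mul_pos (sqrt_pos.2 ?_) (exp_pos _)) (by norm_num)
  nlinarith [hx.1, hx.2]

theorem tiltW_mul_tiltW_sub_tiltW_neg_mul_tiltW_neg (lam x y : ℝ) :
    tiltW lam x * tiltW lam y - tiltW lam (-x) * tiltW lam (-y) =
      2 * (√(1 - x ^ 2) * √(1 - y ^ 2)) * sinh (lam * (x + y)) := by
  rw [sinh_eq, mul_add, neg_add, exp_add, exp_add]
  simp only [tiltW, neg_sq, mul_neg]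
  ring

theorem tiltCov_eq_integral_integral (lam : ℝ) {f g : ℝ → ℝ} (hf : Continuous f)
    (hg : Continuous g) :
    tiltCov lam f g = (∫ x in (-1 : ℝ)..1, ∫ y in (-1 : ℝ)..1,
      (f x - f y) * (g x - g y) * (tiltW lam x * tiltW lam y)) / (2 * tiltZ lam ^ 2) := by
  have hZ := (tiltZ_pos lam).ne'
  rw [integral_integral_sub_mul_sub (tiltW_continuous lam) hf hg, ← tiltZ]
  simp only [tiltCov, tiltE]
  field_simp

theorem tiltCov_x_xsq_neg (lam : ℝ) (hlam : lam < 0) :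
    tiltCov lam (fun x => x) (fun x => x ^ 2) < 0 := by
  set F : ℝ → ℝ → ℝ := fun x y => (x - y) * (x ^ 2 - y ^ 2) * (tiltW lam x * tiltW lam y)
  have hF : Continuous (uncurry F) := by
    have := tiltW_continuous lam
    fun_prop
  have hsym (x y : ℝ) : F x y + F (-x) (-y) =
      2 * ((x - y) ^ 2 * (√(1 - x ^ 2) * √(1 - y ^ 2))) * ((x + y) * sinh (lam * (x + y))) := by
    calc F x y + F (-x) (-y)
        = (x - y) ^ 2 * (x + y) *
            (tiltW lam x * tiltW lam y - tiltW lam (-x) * tiltW lam (-y)) := by ring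
      _ = _ := by rw [tiltW_mul_tiltW_sub_tiltW_neg_mul_tiltW_neg]; ring
  rw [tiltCov_eq_integral_integral lam continuous_id' (continuous_pow 2),
    integral_integral_eq_half_integral_integral_add_comp_neg hF]
  refine div_neg_of_neg_of_pos (div_neg_of_neg_of_pos ?_ two_pos)
    (mul_pos two_pos (pow_pos (tiltZ_pos lam) 2))
  simp only [hsym]
  refine integral_integral_neg_of_nonpos_of_neg (x₀ := 1 / 2) (y₀ := 0) (by fun_prop)
    (by norm_num) (by norm_num) (fun x _ y _ => ?_) (by norm_num) (by norm_num) ?_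
  · exact mul_nonpos_of_nonneg_of_nonpos (by positivity) (mul_sinh_mul_nonpos hlam.le _)
  · exact mul_neg_of_pos_of_neg (by norm_num) (mul_sinh_mul_neg hlam (by norm_num))
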